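/- For every real number r with 0 < r < √(2/3), there exists a symplectic embedding i : B⁴(r) → ℝ⁴ ≅ ℂ² (smooth, injective, with derivative preserving the standard symplectic form at every point) whose image is contained in the open unit ball B⁴(1) ⊂ ℂ², such that the preimage i⁻¹({(z₁,z₂) ∈ ℂ² : |z₁|² = 1/3 and |z₂|² = 1/3}) equals B⁴_ℝ(r). -/

import Mathlib

open Metric Set

noncomputable section

/-- The standard symplectic form `ω = dp₁∧dq₁ + dp₂∧dq₂` on `ℝ⁴ ≅ ℂ²` with coordinates
`(q₁, p₁, q₂, p₂)` corresponding to the indices `(0, 1, 2, 3)`, so that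
`z₁ = q₁ + i p₁` and `z₂ = q₂ + i p₂`. -/
def omega4 (v w : EuclideanSpace ℝ (Fin 4)) : ℝ :=
  v 1 * w 0 - v 0 * w 1 + v 3 * w 2 - v 2 * w 3

namespace RelPack

/-- smoothing parameter dependent auxiliary functions -/
def D (a p : ℝ) : ℝ := Real.sqrt (p ^ 2 + a ^ 2)
def R (a p : ℝ) : ℝ := a * p + p * D a p / 2
def u (a p : ℝ) : ℝ := a + (2 * p ^ 2 + a ^ 2) / (2 * D a p)
def du (a p : ℝ) : ℝ := p * (2 * p ^ 2 + 3 * a ^ 2) / (2 * (D a p) ^ 3)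
def X (a q p : ℝ) : ℝ := q / u a p
def W (a q p : ℝ) : ℝ := 1 + (X a q p) ^ 2
def PP (a q p : ℝ) : ℝ := R a p * W a q p / 2
def RHO (a q p : ℝ) : ℝ := Real.sqrt (1 / 3 + 2 * PP a q p)
def A (a q p : ℝ) : ℝ := RHO a q p * (1 - (X a q p) ^ 2) / W a q p
def B (a q p : ℝ) : ℝ := -(2 * RHO a q p * X a q p / W a q p)

variable {a : ℝ} (ha : 0 < a)

section basic

include ha

lemma D_sq (p : ℝ) : (D a p) ^ 2 = p ^ 2 + a ^ 2 :=
  Real.sq_sqrt (by positivity)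

lemma D_pos (p : ℝ) : 0 < D a p := Real.sqrt_pos.mpr (by positivity)

lemma D_ne (p : ℝ) : D a p ≠ 0 := (D_pos ha p).ne'

lemma abs_le_D (p : ℝ) : |p| ≤ D a p := by
  rw [← Real.sqrt_sq_eq_abs]
  exact Real.sqrt_le_sqrt (by nlinarith [sq_nonneg a])

lemma D_le (p : ℝ) : D a p ≤ |p| + a := by
  have h1 : p ^ 2 + a ^ 2 ≤ (|p| + a) ^ 2 := by
    have := abs_nonneg p
    nlinarith [sq_abs p]
  calc D a p ≤ Real.sqrt ((|p| + a) ^ 2) := Real.sqrt_le_sqrt h1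
    _ = |p| + a := Real.sqrt_sq (by positivity)

lemma u_pos (p : ℝ) : 0 < u a p := by
  have h1 := D_pos ha p
  have : 0 < (2 * p ^ 2 + a ^ 2) / (2 * D a p) := by positivity
  have : 0 < a + (2 * p ^ 2 + a ^ 2) / (2 * D a p) := by linarith
  exact this

lemma u_ne (p : ℝ) : u a p ≠ 0 := (u_pos ha p).ne'

lemma W_pos (q p : ℝ) : 0 < W a q p := by
  have : (0:ℝ) ≤ (X a q p)^2 := sq_nonneg _
  rw [W]; linarith

lemma W_ne (q p : ℝ) : W a q p ≠ 0 := (W_pos ha q p).ne'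

lemma hasDerivAt_D (p : ℝ) : HasDerivAt (D a) (p / D a p) p := by
  have h : HasDerivAt (fun t : ℝ => t ^ 2 + a ^ 2) (2 * p) p := by
    simpa using ((hasDerivAt_pow 2 p).add_const (a ^ 2))
  have h2 := (Real.hasDerivAt_sqrt (by positivity : p ^ 2 + a ^ 2 ≠ 0)).comp p h
  refine HasDerivAt.congr_deriv h2 ?_
  symm
  rw [D]
  field_simp [D, D_ne ha p]

lemma hasDerivAt_R (p : ℝ) : HasDerivAt (R a) (u a p) p := by
  have h1 : HasDerivAt (fun t => a * t) a p := by simpa using (hasDerivAt_id p).const_mul a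
  have h2 : HasDerivAt (fun t => t * D a t / 2) ((1 * D a p + p * (p / D a p)) / 2) p :=
    ((hasDerivAt_id p).mul (hasDerivAt_D ha p)).div_const 2
  have h3 := h1.add h2
  refine HasDerivAt.congr_deriv h3 ?_
  symm
  have hD := D_ne ha p
  have hDsq := D_sq ha p
  rw [u]
  field_simp
  linear_combination (-1) * hDsq

lemma hasDerivAt_u (p : ℝ) : HasDerivAt (u a) (du a p) p := by
  have hnum : HasDerivAt (fun t : ℝ => 2 * t ^ 2 + a ^ 2) (4 * p) p := by
    have := ((hasDerivAt_pow 2 p).const_mul 2).add_const (a ^ 2)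
    simpa using this.congr_deriv (by ring)
  have hden : HasDerivAt (fun t : ℝ => 2 * D a t) (2 * (p / D a p)) p :=
    (hasDerivAt_D ha p).const_mul 2
  have hq := (hnum.div hden (by simpa using (D_ne ha p))).const_add a
  refine HasDerivAt.congr_deriv hq ?_
  symm
  have hD := D_ne ha p
  have hDsq := D_sq ha p
  rw [du]
  field_simp
  linear_combination (-4 * p) * hDsq

lemma R_strictMono : StrictMono (R a) := by
  apply strictMono_of_deriv_pos
  intro p
  rw [(hasDerivAt_R ha p).deriv]
  exact u_pos ha p

lemma R_zero : R a 0 = 0 := by simp [R]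

lemma R_eq_zero_iff (p : ℝ) : R a p = 0 ↔ p = 0 := by
  constructor
  · intro h
    exact (R_strictMono ha).injective (h.trans (R_zero ha).symm)
  · rintro rfl; exact R_zero ha

end basic

section ineq

include ha

lemma abs_R_aux (p : ℝ) : |R a p| ≤ a * |p| + |p| * D a p / 2 := by
  have hdpos := D_pos ha p
  rw [R]
  calc |a * p + p * D a p / 2| ≤ |a * p| + |p * D a p / 2| := abs_add_le _ _
    _ = a * |p| + |p| * D a p / 2 := by
        rw [abs_mul, abs_of_pos ha, abs_div, abs_mul, abs_of_pos hdpos]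
        norm_num

lemma abs_R_le1 (p : ℝ) : |R a p| ≤ p ^ 2 / 2 + 3 * a * |p| / 2 := by
  have h1 := abs_R_aux ha p
  have h2 := D_le ha p
  have hm : 0 ≤ |p| := abs_nonneg p
  have hm2 : |p| ^ 2 = p ^ 2 := sq_abs p
  nlinarith [mul_le_mul_of_nonneg_left h2 hm]

lemma abs_R_le2 (p : ℝ) : |R a p| ≤ (u a p) ^ 2 / 2 := by
  have hd2 : (D a p) ^ 2 = p ^ 2 + a ^ 2 := D_sq ha p
  have hdpos : 0 < D a p := D_pos ha p
  have hm : 0 ≤ |p| := abs_nonneg p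
  have hm2 : |p| ^ 2 = p ^ 2 := sq_abs p
  have h1 : 2 * |p| * D a p ≤ 2 * p ^ 2 + a ^ 2 := by
    nlinarith [sq_nonneg (|p| - D a p)]
  -- piece 1 : a * |p| ≤ a * (2p²+a²)/(2D)
  have piece1 : a * |p| ≤ a * ((2 * p ^ 2 + a ^ 2) / (2 * D a p)) := by
    rw [mul_div_assoc', le_div_iff₀ (by positivity)]
    nlinarith [mul_le_mul_of_nonneg_left h1 ha.le]
  -- piece 2 : |p| * D / 2 ≤ a²/2 + (2p²+a²)²/(8D²)
  have key : 4 * |p| * (D a p) ^ 3 ≤ 4 * a ^ 2 * (D a p) ^ 2 + (2 * p ^ 2 + a ^ 2) ^ 2 := by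
    have hSeq : 4 * a ^ 2 * (D a p) ^ 2 + (2 * p ^ 2 + a ^ 2) ^ 2
        = 4 * p ^ 4 + 8 * p ^ 2 * a ^ 2 + 5 * a ^ 4 := by
      linear_combination (4 * a ^ 2) * hd2
    have hT2 : (4 * |p| * (D a p) ^ 3) ^ 2 = 16 * p ^ 2 * (p ^ 2 + a ^ 2) ^ 3 := by
      have : (4 * |p| * (D a p) ^ 3) ^ 2 = 16 * |p| ^ 2 * ((D a p) ^ 2) ^ 3 := by ring
      rw [this, hm2, hd2]
    have hdiff : (4 * p ^ 4 + 8 * p ^ 2 * a ^ 2 + 5 * a ^ 4) ^ 2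
          - (4 * |p| * (D a p) ^ 3) ^ 2
        = a ^ 2 * (16 * p ^ 6 + 56 * p ^ 4 * a ^ 2 + 64 * p ^ 2 * a ^ 4 + 25 * a ^ 6) := by
      rw [hT2]; ring
    have hS0 : (0:ℝ) ≤ 4 * p ^ 4 + 8 * p ^ 2 * a ^ 2 + 5 * a ^ 4 := by positivity
    have hT0 : (0:ℝ) ≤ 4 * |p| * (D a p) ^ 3 := by positivity
    rw [hSeq]
    nlinarith [hdiff, hS0, hT0, pow_pos ha 8, sq_nonneg p, sq_nonneg (p * a)]
  have piece2 : |p| * D a p / 2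
      ≤ a ^ 2 / 2 + ((2 * p ^ 2 + a ^ 2) / (2 * D a p)) ^ 2 / 2 := by
    rw [div_pow]
    have h2d : (0:ℝ) < (2 * D a p) ^ 2 := by positivity
    rw [div_div]
    have : ((2 * p ^ 2 + a ^ 2) ^ 2) / ((2 * D a p) ^ 2 * 2)
        = ((2 * p ^ 2 + a ^ 2) ^ 2) / (8 * (D a p) ^ 2) := by ring_nf
    rw [this]
    rw [div_add_div _ _ (two_ne_zero) (by positivity), div_le_div_iff₀ (by norm_num) (by positivity)]
    nlinarith [key, hdpos]
  have hu : (u a p) ^ 2 / 2 = a ^ 2 / 2 + a * ((2 * p ^ 2 + a ^ 2) / (2 * D a p))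
      + ((2 * p ^ 2 + a ^ 2) / (2 * D a p)) ^ 2 / 2 := by
    rw [u]; ring_nf
  calc |R a p| ≤ a * |p| + |p| * D a p / 2 := abs_R_aux ha p
    _ ≤ a * ((2 * p ^ 2 + a ^ 2) / (2 * D a p))
        + (a ^ 2 / 2 + ((2 * p ^ 2 + a ^ 2) / (2 * D a p)) ^ 2 / 2) := by
        linarith [piece1, piece2]
    _ = (u a p) ^ 2 / 2 := by rw [hu]; ring

lemma two_PP_eq (q p : ℝ) : 2 * PP a q p = R a p + R a p * (X a q p) ^ 2 := by
  rw [PP, W]; ring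

lemma abs_two_PP_le (q p : ℝ) :
    |2 * PP a q p| ≤ p ^ 2 / 2 + 3 * a * |p| / 2 + q ^ 2 / 2 := by
  have hu2 : 0 < (u a p) ^ 2 := pow_pos (u_pos ha p) 2
  have hX2 : (X a q p) ^ 2 = q ^ 2 / (u a p) ^ 2 := by rw [X, div_pow]
  have h2 : |R a p * (X a q p) ^ 2| ≤ q ^ 2 / 2 := by
    rw [abs_mul, hX2, abs_of_nonneg (by positivity : (0:ℝ) ≤ q ^ 2 / (u a p) ^ 2)]
    calc |R a p| * (q ^ 2 / (u a p) ^ 2)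
        ≤ ((u a p) ^ 2 / 2) * (q ^ 2 / (u a p) ^ 2) := by
          apply mul_le_mul_of_nonneg_right (abs_R_le2 ha p) (by positivity)
      _ = q ^ 2 / 2 := by field_simp [u_ne ha p]
  calc |2 * PP a q p| = |R a p + R a p * (X a q p) ^ 2| := by rw [two_PP_eq ha]
    _ ≤ |R a p| + |R a p * (X a q p) ^ 2| := abs_add_le _ _
    _ ≤ (p ^ 2 / 2 + 3 * a * |p| / 2) + q ^ 2 / 2 := add_le_add (abs_R_le1 ha p) h2
    _ = p ^ 2 / 2 + 3 * a * |p| / 2 + q ^ 2 / 2 := by ring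

end ineq

/-! ### partial derivative formulas -/

def Xq (a q p : ℝ) : ℝ := 1 / u a p
def Xp (a q p : ℝ) : ℝ := -(q * du a p) / (u a p) ^ 2
def Pq (a q p : ℝ) : ℝ := R a p * (X a q p * Xq a q p)
def Pp (a q p : ℝ) : ℝ := u a p * W a q p / 2 + R a p * (X a q p * Xp a q p)
def Aq (a q p : ℝ) : ℝ :=
  (Pq a q p / RHO a q p) * ((1 - X a q p ^ 2) / W a q p)
    + RHO a q p * ((-(4 * X a q p) / W a q p ^ 2) * Xq a q p)
def Ap (a q p : ℝ) : ℝ :=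
  (Pp a q p / RHO a q p) * ((1 - X a q p ^ 2) / W a q p)
    + RHO a q p * ((-(4 * X a q p) / W a q p ^ 2) * Xp a q p)
def Bq (a q p : ℝ) : ℝ :=
  -((Pq a q p / RHO a q p) * (2 * X a q p / W a q p)
    + RHO a q p * ((2 * (1 - X a q p ^ 2) / W a q p ^ 2) * Xq a q p))
def Bp (a q p : ℝ) : ℝ :=
  -((Pp a q p / RHO a q p) * (2 * X a q p / W a q p)
    + RHO a q p * ((2 * (1 - X a q p ^ 2) / W a q p ^ 2) * Xp a q p))

/-- `α • dq + β • dp` as a continuous linear map `ℝ² →L ℝ`. -/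
def pd (α β : ℝ) : ℝ × ℝ →L[ℝ] ℝ :=
  α • ContinuousLinearMap.fst ℝ ℝ ℝ + β • ContinuousLinearMap.snd ℝ ℝ ℝ

lemma pd_apply (α β : ℝ) (v : ℝ × ℝ) : pd α β v = α * v.1 + β * v.2 := by
  simp [pd]

section deriv2d

omit ha in
lemma hasFDerivAt_div2 {f g : ℝ × ℝ → ℝ} {f' g' : ℝ × ℝ →L[ℝ] ℝ} {z : ℝ × ℝ}
    (hf : HasFDerivAt f f' z) (hg : HasFDerivAt g g' z) (h0 : g z ≠ 0) :
    HasFDerivAt (fun y => f y / g y)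
      ((g z)⁻¹ • f' + (-(f z) * ((g z) ^ 2)⁻¹) • g') z := by
  have hfun : (fun y => f y / g y) = fun y => f y * (g y)⁻¹ := by
    funext y; rw [div_eq_mul_inv]
  rw [hfun]
  have hi : HasFDerivAt (fun y => (g y)⁻¹) ((-((g z) ^ 2)⁻¹) • g') z :=
    (hasDerivAt_inv h0).comp_hasFDerivAt z hg
  have h2 := hf.mul hi
  refine HasFDerivAt.congr_fderiv h2 ?_
  symm
  rw [smul_smul, add_comm]
  congr 1
  ring_nf

include ha

lemma hasFDerivAt_X (q p : ℝ) :
    HasFDerivAt (fun z : ℝ × ℝ => X a z.1 z.2) (pd (Xq a q p) (Xp a q p)) (q, p) := by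
  have hu2 : HasFDerivAt (fun z : ℝ × ℝ => u a z.2)
      ((du a p) • ContinuousLinearMap.snd ℝ ℝ ℝ) (q, p) :=
    (hasDerivAt_u ha p).comp_hasFDerivAt (h₂ := u a) (f := Prod.snd) (q, p) hasFDerivAt_snd
  have hq : HasFDerivAt (fun z : ℝ × ℝ => z.1) (ContinuousLinearMap.fst ℝ ℝ ℝ) (q, p) :=
    hasFDerivAt_fst
  have h := hasFDerivAt_div2 hq hu2 (u_ne ha p)
  refine HasFDerivAt.congr_fderiv h ?_
  symm
  refine ContinuousLinearMap.ext fun v => ?_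
  have hune := u_ne ha p
  simp only [pd_apply, ContinuousLinearMap.add_apply, ContinuousLinearMap.smul_apply,
    ContinuousLinearMap.coe_fst', ContinuousLinearMap.coe_snd', smul_eq_mul, Xq, Xp]
  field_simp
  try ring
  try tauto

lemma oneX_pos (q p : ℝ) : (0:ℝ) < 1 + X a q p * X a q p := by
  nlinarith [sq_nonneg (X a q p)]

lemma hasFDerivAt_PP (q p : ℝ) :
    HasFDerivAt (fun z : ℝ × ℝ => PP a z.1 z.2) (pd (Pq a q p) (Pp a q p)) (q, p) := by
  have hX := hasFDerivAt_X ha q p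
  have hR2 : HasFDerivAt (fun z : ℝ × ℝ => R a z.2)
      ((u a p) • ContinuousLinearMap.snd ℝ ℝ ℝ) (q, p) :=
    (hasDerivAt_R ha p).comp_hasFDerivAt (h₂ := R a) (f := Prod.snd) (q, p) hasFDerivAt_snd
  have hfun2 : (fun z : ℝ × ℝ => PP a z.1 z.2)
      = fun z : ℝ × ℝ => (1/2 : ℝ) * (R a z.2 * (1 + X a z.1 z.2 * X a z.1 z.2)) := by
    funext z; rw [PP, W]; ring
  rw [hfun2]
  have h := ((hR2.mul ((hX.mul hX).const_add 1)).const_mul (1/2 : ℝ))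
  refine HasFDerivAt.congr_fderiv h ?_
  symm
  refine ContinuousLinearMap.ext fun v => ?_
  have hune := u_ne ha p
  simp only [pd_apply, ContinuousLinearMap.add_apply, ContinuousLinearMap.smul_apply,
    ContinuousLinearMap.coe_fst', ContinuousLinearMap.coe_snd', smul_eq_mul, Pq, Pp, W, Pi.mul_apply]
  field_simp
  ring

lemma hasFDerivAt_RHO (q p : ℝ) (hpos : 0 < 1 / 3 + 2 * PP a q p) :
    HasFDerivAt (fun z : ℝ × ℝ => RHO a z.1 z.2)
      (pd (Pq a q p / RHO a q p) (Pp a q p / RHO a q p)) (q, p) := by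
  have hP := hasFDerivAt_PP ha q p
  have hin : HasFDerivAt (fun z : ℝ × ℝ => 1 / 3 + 2 * PP a z.1 z.2)
      ((2 : ℝ) • pd (Pq a q p) (Pp a q p)) (q, p) :=
    (hP.const_mul 2).const_add (1 / 3)
  have hsq := (Real.hasDerivAt_sqrt hpos.ne').comp_hasFDerivAt (q, p) hin
  have hρ : RHO a q p = Real.sqrt (1 / 3 + 2 * PP a q p) := rfl
  have hρpos : 0 < RHO a q p := by rw [hρ]; exact Real.sqrt_pos.mpr hpos
  refine HasFDerivAt.congr_fderiv hsq ?_
  symm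
  refine ContinuousLinearMap.ext fun v => ?_
  rw [← hρ]
  simp only [pd_apply, ContinuousLinearMap.add_apply, ContinuousLinearMap.smul_apply,
    ContinuousLinearMap.coe_fst', ContinuousLinearMap.coe_snd', smul_eq_mul]
  field_simp

lemma hasFDerivAt_A (q p : ℝ) (hpos : 0 < 1 / 3 + 2 * PP a q p) :
    HasFDerivAt (fun z : ℝ × ℝ => A a z.1 z.2) (pd (Aq a q p) (Ap a q p)) (q, p) := by
  have hρpos : 0 < RHO a q p := Real.sqrt_pos.mpr hpos
  have hX := hasFDerivAt_X ha q p
  have hRHO := hasFDerivAt_RHO ha q p hpos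
  have hfun2 : (fun z : ℝ × ℝ => A a z.1 z.2)
      = fun z : ℝ × ℝ => RHO a z.1 z.2 * (1 + (-(X a z.1 z.2)) * X a z.1 z.2)
          / (1 + X a z.1 z.2 * X a z.1 z.2) := by
    funext z; rw [A, W]; ring
  rw [hfun2]
  have h := hasFDerivAt_div2 (hRHO.mul (((hX.neg).mul hX).const_add 1))
    ((hX.mul hX).const_add 1) (oneX_pos ha q p).ne'
  refine HasFDerivAt.congr_fderiv h ?_
  symm
  refine ContinuousLinearMap.ext fun v => ?_
  have hρne := hρpos.ne'
  have hune := u_ne ha p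
  have hWpos := oneX_pos ha q p
  simp only [pd_apply, ContinuousLinearMap.add_apply, ContinuousLinearMap.smul_apply,
    ContinuousLinearMap.coe_fst', ContinuousLinearMap.coe_snd', smul_eq_mul,
    ContinuousLinearMap.neg_apply, Aq, Ap, W, Pi.mul_apply, Pi.neg_apply]
  field_simp
  ring

lemma hasFDerivAt_B (q p : ℝ) (hpos : 0 < 1 / 3 + 2 * PP a q p) :
    HasFDerivAt (fun z : ℝ × ℝ => B a z.1 z.2) (pd (Bq a q p) (Bp a q p)) (q, p) := by
  have hρpos : 0 < RHO a q p := Real.sqrt_pos.mpr hpos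
  have hX := hasFDerivAt_X ha q p
  have hRHO := hasFDerivAt_RHO ha q p hpos
  have hfun2 : (fun z : ℝ × ℝ => B a z.1 z.2)
      = fun z : ℝ × ℝ => -(2 * RHO a z.1 z.2 * X a z.1 z.2
          / (1 + X a z.1 z.2 * X a z.1 z.2)) := by
    funext z; rw [B, W]; ring
  rw [hfun2]
  have h := (hasFDerivAt_div2 ((hRHO.const_mul 2).mul hX)
    ((hX.mul hX).const_add 1) (oneX_pos ha q p).ne').neg
  refine HasFDerivAt.congr_fderiv h ?_
  symm
  refine ContinuousLinearMap.ext fun v => ?_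
  have hρne := hρpos.ne'
  have hune := u_ne ha p
  have hWpos := oneX_pos ha q p
  simp only [pd_apply, ContinuousLinearMap.add_apply, ContinuousLinearMap.smul_apply,
    ContinuousLinearMap.coe_fst', ContinuousLinearMap.coe_snd', smul_eq_mul,
    ContinuousLinearMap.neg_apply, Bq, Bp, W, Pi.mul_apply, Pi.neg_apply]
  field_simp
  ring

/-- the area–preservation (determinant one) identity -/
lemma det_one (q p : ℝ) (hpos : 0 < 1 / 3 + 2 * PP a q p) :
    Aq a q p * Bp a q p - Ap a q p * Bq a q p = 1 := by
  have hρpos : 0 < RHO a q p := Real.sqrt_pos.mpr hpos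
  have hρne := hρpos.ne'
  have hune := u_ne ha p
  have hWne : (1 : ℝ) + X a q p ^ 2 ≠ 0 := by positivity
  simp only [Aq, Ap, Bq, Bp, Pq, Pp, Xq, Xp, W]
  field_simp
  ring

end deriv2d


section smooth

variable {n : WithTop ℕ∞}

include ha

lemma contDiffAt_D (p : ℝ) : ContDiffAt ℝ n (D a) p := by
  have h1 : ContDiffAt ℝ n (fun t : ℝ => t ^ 2 + a ^ 2) p :=
    ((contDiff_id.pow 2).add contDiff_const).contDiffAt
  exact (Real.contDiffAt_sqrt (by positivity)).comp p h1

lemma contDiffAt_u (p : ℝ) : ContDiffAt ℝ n (u a) p := by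
  have h1 : ContDiffAt ℝ n (fun t : ℝ => 2 * t ^ 2 + a ^ 2) p :=
    ((contDiff_const.mul (contDiff_id.pow 2)).add contDiff_const).contDiffAt
  have h2 : ContDiffAt ℝ n (fun t : ℝ => 2 * D a t) p :=
    (contDiffAt_const).mul (contDiffAt_D ha p)
  have h3 : (2 : ℝ) * D a p ≠ 0 := by
    have := D_pos ha p; positivity
  exact (contDiffAt_const).add (h1.div h2 h3)

lemma contDiffAt_R (p : ℝ) : ContDiffAt ℝ n (R a) p := by
  have h1 : ContDiffAt ℝ n (fun t : ℝ => a * t) p := (contDiff_const.mul contDiff_id).contDiffAt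
  have h2 : ContDiffAt ℝ n (fun t : ℝ => t * D a t) p := contDiffAt_id.mul (contDiffAt_D ha p)
  exact h1.add (h2.div_const 2)

lemma contDiffAt_Xuc (q p : ℝ) : ContDiffAt ℝ n (fun z : ℝ × ℝ => X a z.1 z.2) (q, p) := by
  exact contDiffAt_fst.div (by have := (contDiffAt_u (n := n) ha p).comp (q, p) contDiffAt_snd; exact this) (u_ne ha p)

lemma contDiffAt_Wuc (q p : ℝ) : ContDiffAt ℝ n (fun z : ℝ × ℝ => W a z.1 z.2) (q, p) := by
  have : (fun z : ℝ × ℝ => W a z.1 z.2) = fun z : ℝ × ℝ => 1 + X a z.1 z.2 ^ 2 := by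
    funext z; rw [W]
  rw [this]
  exact contDiffAt_const.add ((contDiffAt_Xuc ha q p).pow 2)

lemma contDiffAt_PPuc (q p : ℝ) : ContDiffAt ℝ n (fun z : ℝ × ℝ => PP a z.1 z.2) (q, p) := by
  have : (fun z : ℝ × ℝ => PP a z.1 z.2)
      = fun z : ℝ × ℝ => R a z.2 * W a z.1 z.2 / 2 := by
    funext z; rw [PP]
  rw [this]
  exact (((contDiffAt_R ha p).comp (q, p) contDiffAt_snd).mul (contDiffAt_Wuc ha q p)).div_const 2

lemma contDiffAt_RHOuc (q p : ℝ) (hpos : 0 < 1 / 3 + 2 * PP a q p) :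
    ContDiffAt ℝ n (fun z : ℝ × ℝ => RHO a z.1 z.2) (q, p) := by
  have hin : ContDiffAt ℝ n (fun z : ℝ × ℝ => 1 / 3 + 2 * PP a z.1 z.2) (q, p) :=
    contDiffAt_const.add (contDiffAt_const.mul (contDiffAt_PPuc ha q p))
  exact (Real.contDiffAt_sqrt hpos.ne').comp (q, p) hin

lemma contDiffAt_Auc (q p : ℝ) (hpos : 0 < 1 / 3 + 2 * PP a q p) :
    ContDiffAt ℝ n (fun z : ℝ × ℝ => A a z.1 z.2) (q, p) := by
  have : (fun z : ℝ × ℝ => A a z.1 z.2)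
      = fun z : ℝ × ℝ => RHO a z.1 z.2 * (1 - X a z.1 z.2 ^ 2) / W a z.1 z.2 := by
    funext z; rw [A]
  rw [this]
  exact ((contDiffAt_RHOuc ha q p hpos).mul
    (contDiffAt_const.sub ((contDiffAt_Xuc ha q p).pow 2))).div
    (contDiffAt_Wuc ha q p) (W_ne ha q p)

lemma contDiffAt_Buc (q p : ℝ) (hpos : 0 < 1 / 3 + 2 * PP a q p) :
    ContDiffAt ℝ n (fun z : ℝ × ℝ => B a z.1 z.2) (q, p) := by
  have : (fun z : ℝ × ℝ => B a z.1 z.2)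
      = fun z : ℝ × ℝ => -(2 * RHO a z.1 z.2 * X a z.1 z.2 / W a z.1 z.2) := by
    funext z; rw [B]
  rw [this]
  exact (((contDiffAt_const.mul (contDiffAt_RHOuc ha q p hpos)).mul
    (contDiffAt_Xuc ha q p)).div (contDiffAt_Wuc ha q p) (W_ne ha q p)).neg

end smooth

section values

include ha

lemma AB_sq (q p : ℝ) (hpos : 0 ≤ 1 / 3 + 2 * PP a q p) :
    A a q p ^ 2 + B a q p ^ 2 = 1 / 3 + 2 * PP a q p := by
  have hρ2 : RHO a q p ^ 2 = 1 / 3 + 2 * PP a q p := Real.sq_sqrt hpos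
  have hWne := W_ne ha q p
  have key : A a q p ^ 2 + B a q p ^ 2
      = RHO a q p ^ 2 * ((1 - X a q p ^ 2) ^ 2 + (2 * X a q p) ^ 2) / W a q p ^ 2 := by
    rw [A, B]; ring
  have hW2 : (1 - X a q p ^ 2) ^ 2 + (2 * X a q p) ^ 2 = W a q p ^ 2 := by
    rw [W]; ring
  rw [key, hW2, mul_div_assoc, div_self (pow_ne_zero 2 hWne), mul_one, hρ2]

lemma rho_pos (q p : ℝ) (hpos : 0 < 1 / 3 + 2 * PP a q p) : 0 < RHO a q p :=
  Real.sqrt_pos.mpr hpos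

/-- recovery of `X` from the image point -/
lemma X_recover (q p : ℝ) (hpos : 0 < 1 / 3 + 2 * PP a q p) :
    B a q p / (RHO a q p + A a q p) = -(X a q p) := by
  have hρpos := rho_pos ha q p hpos
  have hWne := W_ne ha q p
  have hWpos := W_pos ha q p
  have hsum : RHO a q p + A a q p = 2 * RHO a q p / W a q p := by
    rw [A, W]
    field_simp
    ring
  rw [hsum, B]
  rw [neg_div]
  congr 1
  rw [div_div_div_cancel_right₀ _ (c := W a q p)]
  · field_simp
  · exact hWne

/-- injectivity of the planar map -/
lemma inj2 (q p q' p' : ℝ) (h1 : 0 < 1 / 3 + 2 * PP a q p) (h1' : 0 < 1 / 3 + 2 * PP a q' p')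
    (hA : A a q p = A a q' p') (hB : B a q p = B a q' p') : q = q' ∧ p = p' := by
  have hPP : PP a q p = PP a q' p' := by
    have e1 := AB_sq ha q p h1.le
    have e2 := AB_sq ha q' p' h1'.le
    rw [hA, hB, e2] at e1
    linarith
  have hRHO : RHO a q p = RHO a q' p' := by rw [RHO, RHO, hPP]
  have hX : X a q p = X a q' p' := by
    have r1 := X_recover ha q p h1
    have r2 := X_recover ha q' p' h1'
    rw [hA, hB, hRHO, r2] at r1
    linarith [r1]
  have hW : W a q p = W a q' p' := by rw [W, W, hX]
  have hp : p = p' := by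
    apply (R_strictMono ha).injective
    have hPP2 : R a p * W a q p / 2 = R a p' * W a q' p' / 2 := hPP
    rw [hW] at hPP2
    have := W_ne ha q' p'
    field_simp at hPP2
    exact hPP2
  have hq : q = q' := by
    have hXq : q / u a p = q' / u a p' := hX
    rw [hp] at hXq
    have := u_ne ha p'
    field_simp at hXq
    exact hXq
  exact ⟨hq, hp⟩

/-- the torus membership criterion -/
lemma torus_iff (q p : ℝ) (hpos : 0 < 1 / 3 + 2 * PP a q p) :
    A a q p ^ 2 + B a q p ^ 2 = 1 / 3 ↔ p = 0 := by
  rw [AB_sq ha q p hpos.le]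
  have hWpos := W_pos ha q p
  constructor
  · intro h
    have hPP : PP a q p = 0 := by linarith
    have hR : R a p = 0 := by
      have : R a p * W a q p / 2 = 0 := hPP
      rcases mul_eq_zero.mp (by linarith [this] : R a p * W a q p = 0) with h' | h'
      · exact h'
      · exact absurd h' (W_ne ha q p)
    exact (R_eq_zero_iff ha p).mp hR
  · rintro rfl
    have : PP a q 0 = 0 := by rw [PP, R_zero ha]; ring
    rw [this]; ring

end values


/-! ### the four dimensional map -/

def E4 : EuclideanSpace ℝ (Fin 4) ≃L[ℝ] (Fin 4 → ℝ) :=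
  PiLp.continuousLinearEquiv 2 ℝ (fun _ : Fin 4 => ℝ)

def G (a : ℝ) : (Fin 4 → ℝ) → (Fin 4 → ℝ) := fun y =>
  ![A a (y 0) (y 1), B a (y 0) (y 1), A a (y 2) (y 3), B a (y 2) (y 3)]

def Phi (a : ℝ) : EuclideanSpace ℝ (Fin 4) → EuclideanSpace ℝ (Fin 4) :=
  fun x => E4.symm (G a (E4 x))

def proj01 : (Fin 4 → ℝ) →L[ℝ] ℝ × ℝ :=
  (ContinuousLinearMap.proj 0).prod (ContinuousLinearMap.proj 1)

def proj23 : (Fin 4 → ℝ) →L[ℝ] ℝ × ℝ :=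
  (ContinuousLinearMap.proj 2).prod (ContinuousLinearMap.proj 3)

def LG (a : ℝ) (y : Fin 4 → ℝ) : (Fin 4 → ℝ) →L[ℝ] (Fin 4 → ℝ) :=
  ContinuousLinearMap.pi
    ![(pd (Aq a (y 0) (y 1)) (Ap a (y 0) (y 1))).comp proj01,
      (pd (Bq a (y 0) (y 1)) (Bp a (y 0) (y 1))).comp proj01,
      (pd (Aq a (y 2) (y 3)) (Ap a (y 2) (y 3))).comp proj23,
      (pd (Bq a (y 2) (y 3)) (Bp a (y 2) (y 3))).comp proj23]

lemma Phi_apply (a : ℝ) (x : EuclideanSpace ℝ (Fin 4)) (i : Fin 4) :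
    Phi a x i = G a (fun j => x j) i := by
  rfl

section assembly

include ha



lemma hasFDerivAt_G (y : Fin 4 → ℝ)
    (h1 : 0 < 1 / 3 + 2 * PP a (y 0) (y 1))
    (h2 : 0 < 1 / 3 + 2 * PP a (y 2) (y 3)) :
    HasFDerivAt (G a) (LG a y) y := by
  have c0 : (fun x : Fin 4 → ℝ => A a (x 0) (x 1))
      = (fun z : ℝ × ℝ => A a z.1 z.2) ∘ ⇑proj01 := by
    funext x; simp [proj01]
  have c1 : (fun x : Fin 4 → ℝ => B a (x 0) (x 1))
      = (fun z : ℝ × ℝ => B a z.1 z.2) ∘ ⇑proj01 := by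
    funext x; simp [proj01]
  have c2 : (fun x : Fin 4 → ℝ => A a (x 2) (x 3))
      = (fun z : ℝ × ℝ => A a z.1 z.2) ∘ ⇑proj23 := by
    funext x; simp [proj23]
  have c3 : (fun x : Fin 4 → ℝ => B a (x 2) (x 3))
      = (fun z : ℝ × ℝ => B a z.1 z.2) ∘ ⇑proj23 := by
    funext x; simp [proj23]
  have h0 : HasFDerivAt (fun x : Fin 4 → ℝ => A a (x 0) (x 1))
      ((pd (Aq a (y 0) (y 1)) (Ap a (y 0) (y 1))).comp proj01) y := by
    rw [c0]; exact (hasFDerivAt_A ha (y 0) (y 1) h1).comp y proj01.hasFDerivAt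
  have h1' : HasFDerivAt (fun x : Fin 4 → ℝ => B a (x 0) (x 1))
      ((pd (Bq a (y 0) (y 1)) (Bp a (y 0) (y 1))).comp proj01) y := by
    rw [c1]; exact (hasFDerivAt_B ha (y 0) (y 1) h1).comp y proj01.hasFDerivAt
  have h2' : HasFDerivAt (fun x : Fin 4 → ℝ => A a (x 2) (x 3))
      ((pd (Aq a (y 2) (y 3)) (Ap a (y 2) (y 3))).comp proj23) y := by
    rw [c2]; exact (hasFDerivAt_A ha (y 2) (y 3) h2).comp y proj23.hasFDerivAt
  have h3' : HasFDerivAt (fun x : Fin 4 → ℝ => B a (x 2) (x 3))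
      ((pd (Bq a (y 2) (y 3)) (Bp a (y 2) (y 3))).comp proj23) y := by
    rw [c3]; exact (hasFDerivAt_B ha (y 2) (y 3) h2).comp y proj23.hasFDerivAt
  rw [LG]
  apply hasFDerivAt_pi.mpr
  intro i
  fin_cases i
  · simpa [G] using h0
  · simpa [G] using h1'
  · simpa [G] using h2'
  · simpa [G] using h3'

lemma hasFDerivAt_Phi (x : EuclideanSpace ℝ (Fin 4))
    (h1 : 0 < 1 / 3 + 2 * PP a (x 0) (x 1))
    (h2 : 0 < 1 / 3 + 2 * PP a (x 2) (x 3)) :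
    HasFDerivAt (Phi a)
      (((E4.symm : (Fin 4 → ℝ) →L[ℝ] EuclideanSpace ℝ (Fin 4)).comp
        (LG a (E4 x))).comp (E4 : EuclideanSpace ℝ (Fin 4) →L[ℝ] (Fin 4 → ℝ))) x := by
  have hG : HasFDerivAt (G a) (LG a (E4 x)) (E4 x) := by
    refine hasFDerivAt_G ha (E4 x) ?_ ?_
    · exact h1
    · exact h2
  exact (E4.symm.hasFDerivAt.comp _ (hG.comp x E4.hasFDerivAt))

lemma fderiv_Phi_apply (x : EuclideanSpace ℝ (Fin 4))
    (h1 : 0 < 1 / 3 + 2 * PP a (x 0) (x 1))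
    (h2 : 0 < 1 / 3 + 2 * PP a (x 2) (x 3)) (v : EuclideanSpace ℝ (Fin 4)) :
    (fderiv ℝ (Phi a) x) v = (E4.symm
      ![Aq a (x 0) (x 1) * v 0 + Ap a (x 0) (x 1) * v 1,
        Bq a (x 0) (x 1) * v 0 + Bp a (x 0) (x 1) * v 1,
        Aq a (x 2) (x 3) * v 2 + Ap a (x 2) (x 3) * v 3,
        Bq a (x 2) (x 3) * v 2 + Bp a (x 2) (x 3) * v 3] : EuclideanSpace ℝ (Fin 4)) := by
  rw [(hasFDerivAt_Phi ha x h1 h2).fderiv]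
  simp only [ContinuousLinearMap.comp_apply, ContinuousLinearEquiv.coe_coe]
  refine congrArg _ ?_
  simp only [LG]
  refine funext fun i => ?_
  rw [ContinuousLinearMap.pi_apply]
  fin_cases i <;>
    simp [proj01, proj23, pd_apply, E4]

lemma contDiffAt_G {n : WithTop ℕ∞} (y : Fin 4 → ℝ)
    (h1 : 0 < 1 / 3 + 2 * PP a (y 0) (y 1))
    (h2 : 0 < 1 / 3 + 2 * PP a (y 2) (y 3)) :
    ContDiffAt ℝ n (G a) y := by
  have c0 : (fun x : Fin 4 → ℝ => A a (x 0) (x 1))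
      = (fun z : ℝ × ℝ => A a z.1 z.2) ∘ ⇑proj01 := by
    funext x; simp [proj01]
  have c1 : (fun x : Fin 4 → ℝ => B a (x 0) (x 1))
      = (fun z : ℝ × ℝ => B a z.1 z.2) ∘ ⇑proj01 := by
    funext x; simp [proj01]
  have c2 : (fun x : Fin 4 → ℝ => A a (x 2) (x 3))
      = (fun z : ℝ × ℝ => A a z.1 z.2) ∘ ⇑proj23 := by
    funext x; simp [proj23]
  have c3 : (fun x : Fin 4 → ℝ => B a (x 2) (x 3))
      = (fun z : ℝ × ℝ => B a z.1 z.2) ∘ ⇑proj23 := by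
    funext x; simp [proj23]
  have h0 : ContDiffAt ℝ n (fun x : Fin 4 → ℝ => A a (x 0) (x 1)) y := by
    rw [c0]; exact (contDiffAt_Auc ha (y 0) (y 1) h1).comp y proj01.contDiff.contDiffAt
  have h1' : ContDiffAt ℝ n (fun x : Fin 4 → ℝ => B a (x 0) (x 1)) y := by
    rw [c1]; exact (contDiffAt_Buc ha (y 0) (y 1) h1).comp y proj01.contDiff.contDiffAt
  have h2' : ContDiffAt ℝ n (fun x : Fin 4 → ℝ => A a (x 2) (x 3)) y := by
    rw [c2]; exact (contDiffAt_Auc ha (y 2) (y 3) h2).comp y proj23.contDiff.contDiffAt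
  have h3' : ContDiffAt ℝ n (fun x : Fin 4 → ℝ => B a (x 2) (x 3)) y := by
    rw [c3]; exact (contDiffAt_Buc ha (y 2) (y 3) h2).comp y proj23.contDiff.contDiffAt
  apply contDiffAt_pi.mpr
  intro i
  fin_cases i
  · simpa [G] using h0
  · simpa [G] using h1'
  · simpa [G] using h2'
  · simpa [G] using h3'

end assembly

lemma Phi_coord0 (a : ℝ) (x : EuclideanSpace ℝ (Fin 4)) :
    Phi a x 0 = A a (x 0) (x 1) := rfl
lemma Phi_coord1 (a : ℝ) (x : EuclideanSpace ℝ (Fin 4)) :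
    Phi a x 1 = B a (x 0) (x 1) := rfl
lemma Phi_coord2 (a : ℝ) (x : EuclideanSpace ℝ (Fin 4)) :
    Phi a x 2 = A a (x 2) (x 3) := rfl
lemma Phi_coord3 (a : ℝ) (x : EuclideanSpace ℝ (Fin 4)) :
    Phi a x 3 = B a (x 2) (x 3) := rfl

end RelPack

open RelPack in
/-- For every `0 < r < √(2/3)` there is a symplectic embedding `i = Φ` of the open ball
`B⁴(r)` into the open unit ball `B⁴(1) ⊂ ℂ² ≅ ℝ⁴` such that the preimage of the
Clifford torus `{|z₁|² = |z₂|² = 1/3}` is exactly `B⁴_ℝ(r) = {p₁ = p₂ = 0} ∩ B⁴(r)`: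
a relative packing of `B⁴(r)` into `(ℂP², 𝕋²_Cliff)`. -/
theorem relative_packing_ball (r : ℝ) (hr0 : 0 < r) (hr : r < Real.sqrt (2 / 3)) :
    ∃ Φ : EuclideanSpace ℝ (Fin 4) → EuclideanSpace ℝ (Fin 4),
      ContDiffOn ℝ (⊤ : ℕ∞) Φ (ball 0 r) ∧
      InjOn Φ (ball 0 r) ∧
      (∀ x ∈ ball (0 : EuclideanSpace ℝ (Fin 4)) r, ∀ v w,
        omega4 (fderiv ℝ Φ x v) (fderiv ℝ Φ x w) = omega4 v w) ∧
      (∀ x ∈ ball (0 : EuclideanSpace ℝ (Fin 4)) r, ‖Φ x‖ < 1) ∧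
      (∀ x ∈ ball (0 : EuclideanSpace ℝ (Fin 4)) r,
        (((Φ x 0) ^ 2 + (Φ x 1) ^ 2 = 1 / 3 ∧ (Φ x 2) ^ 2 + (Φ x 3) ^ 2 = 1 / 3) ↔
          (x 1 = 0 ∧ x 3 = 0))) := by
  have hr2 : r ^ 2 < 2 / 3 := (Real.lt_sqrt hr0.le).mp hr
  set δ : ℝ := 1 / 3 - r ^ 2 / 2 with hδdef
  have hδ : 0 < δ := by rw [hδdef]; linarith
  set a : ℝ := δ / (6 * r) with hadef
  have ha : 0 < a := by rw [hadef]; positivity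
  have har : a * r = δ / 6 := by rw [hadef]; field_simp
  -- ball membership gives the coordinate bound
  have hball : ∀ x : EuclideanSpace ℝ (Fin 4), x ∈ ball (0 : EuclideanSpace ℝ (Fin 4)) r →
      (x 0) ^ 2 + (x 1) ^ 2 + ((x 2) ^ 2 + (x 3) ^ 2) < r ^ 2 := by
    intro x hx
    rw [mem_ball_zero_iff, EuclideanSpace.norm_eq] at hx
    have hsum : ∑ i : Fin 4, ‖x i‖ ^ 2
        = (x 0) ^ 2 + (x 1) ^ 2 + ((x 2) ^ 2 + (x 3) ^ 2) := by
      rw [Fin.sum_univ_four]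
      simp only [Real.norm_eq_abs, sq_abs]
      ring
    rw [hsum] at hx
    exact (Real.sqrt_lt' hr0).mp hx
  have hb1 : ∀ x : EuclideanSpace ℝ (Fin 4), x ∈ ball (0 : EuclideanSpace ℝ (Fin 4)) r →
      (x 0) ^ 2 + (x 1) ^ 2 < r ^ 2 := by
    intro x hx
    have h4 := hball x hx
    nlinarith [sq_nonneg (x 2), sq_nonneg (x 3)]
  have hb2 : ∀ x : EuclideanSpace ℝ (Fin 4), x ∈ ball (0 : EuclideanSpace ℝ (Fin 4)) r →
      (x 2) ^ 2 + (x 3) ^ 2 < r ^ 2 := by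
    intro x hx
    have h4 := hball x hx
    nlinarith [sq_nonneg (x 0), sq_nonneg (x 1)]
  -- the master estimate on each factor
  have key : ∀ q p : ℝ, q ^ 2 + p ^ 2 < r ^ 2 →
      |2 * PP a q p| ≤ (q ^ 2 + p ^ 2) / 2 + δ / 4 := by
    intro q p h
    have habs := abs_two_PP_le ha q p
    have hp : |p| ≤ r := by
      nlinarith [abs_nonneg p, sq_abs p, sq_nonneg q]
    have h3a : 3 * a * |p| / 2 ≤ δ / 4 := by
      have := mul_le_mul_of_nonneg_left hp ha.le
      nlinarith [har]
    calc |2 * PP a q p| ≤ p ^ 2 / 2 + 3 * a * |p| / 2 + q ^ 2 / 2 := habs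
      _ ≤ (q ^ 2 + p ^ 2) / 2 + δ / 4 := by linarith
  have pos : ∀ q p : ℝ, q ^ 2 + p ^ 2 < r ^ 2 → 0 < 1 / 3 + 2 * PP a q p := by
    intro q p h
    have hk := key q p h
    have := abs_le.mp hk
    have hql : (q ^ 2 + p ^ 2) / 2 + δ / 4 < r ^ 2 / 2 + δ / 4 := by linarith
    have : -(r ^ 2 / 2 + δ / 4) < 2 * PP a q p := by linarith
    rw [hδdef] at *
    linarith
  refine ⟨Phi a, ?_, ?_, ?_, ?_, ?_⟩
  -- smoothness
  · intro x hx
    have h1 := pos (x 0) (x 1) (hb1 x hx)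
    have h2 := pos (x 2) (x 3) (hb2 x hx)
    apply ContDiffAt.contDiffWithinAt
    have hPhifun : Phi a = (⇑(E4.symm) ∘ (G a ∘ ⇑E4)) := rfl
    rw [hPhifun]
    refine (E4.symm.contDiff.contDiffAt).comp _ ?_
    exact (contDiffAt_G ha (E4 x) h1 h2).comp _ (E4.contDiff.contDiffAt)
  -- injectivity
  · intro x hx y hy hxy
    have h1x := pos (x 0) (x 1) (hb1 x hx)
    have h2x := pos (x 2) (x 3) (hb2 x hx)
    have h1y := pos (y 0) (y 1) (hb1 y hy)
    have h2y := pos (y 2) (y 3) (hb2 y hy)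
    have e0 : A a (x 0) (x 1) = A a (y 0) (y 1) := by
      rw [← Phi_coord0, ← Phi_coord0, hxy]
    have e1 : B a (x 0) (x 1) = B a (y 0) (y 1) := by
      rw [← Phi_coord1, ← Phi_coord1, hxy]
    have e2 : A a (x 2) (x 3) = A a (y 2) (y 3) := by
      rw [← Phi_coord2, ← Phi_coord2, hxy]
    have e3 : B a (x 2) (x 3) = B a (y 2) (y 3) := by
      rw [← Phi_coord3, ← Phi_coord3, hxy]
    obtain ⟨eq0, eq1⟩ := inj2 ha _ _ _ _ h1x h1y e0 e1
    obtain ⟨eq2, eq3⟩ := inj2 ha _ _ _ _ h2x h2y e2 e3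
    ext i
    fin_cases i
    · exact eq0
    · exact eq1
    · exact eq2
    · exact eq3
  -- symplectic
  · intro x hx v w
    have h1 := pos (x 0) (x 1) (hb1 x hx)
    have h2 := pos (x 2) (x 3) (hb2 x hx)
    rw [fderiv_Phi_apply ha x h1 h2 v, fderiv_Phi_apply ha x h1 h2 w]
    have d1 := det_one ha (x 0) (x 1) h1
    have d2 := det_one ha (x 2) (x 3) h2
    simp only [omega4, E4, PiLp.coe_symm_continuousLinearEquiv, PiLp.toLp_apply,
      Matrix.cons_val_zero, Matrix.cons_val_one, Matrix.head_cons, Matrix.cons_val_two,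
      Matrix.tail_cons, Matrix.cons_val_three]
    linear_combination (v 1 * w 0 - v 0 * w 1) * d1 + (v 3 * w 2 - v 2 * w 3) * d2
  -- norm bound
  · intro x hx
    have h4 := hball x hx
    have hq1 := hb1 x hx
    have hq2 := hb2 x hx
    have h1 := pos (x 0) (x 1) hq1
    have h2 := pos (x 2) (x 3) hq2
    have k1 := key (x 0) (x 1) hq1
    have k2 := key (x 2) (x 3) hq2
    rw [EuclideanSpace.norm_eq]
    have hsum : ∑ i : Fin 4, ‖Phi a x i‖ ^ 2
        = (2 / 3 : ℝ) + (2 * PP a (x 0) (x 1) + 2 * PP a (x 2) (x 3)) := by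
      rw [Fin.sum_univ_four, Phi_coord0, Phi_coord1, Phi_coord2, Phi_coord3]
      simp only [Real.norm_eq_abs, sq_abs]
      have s1 := AB_sq ha (x 0) (x 1) h1.le
      have s2 := AB_sq ha (x 2) (x 3) h2.le
      linarith
    rw [hsum]
    rw [Real.sqrt_lt' one_pos]
    have ha1 := (abs_le.mp k1).2
    have ha2 := (abs_le.mp k2).2
    have h1sq : (1 : ℝ) ^ 2 = 1 := one_pow 2
    rw [h1sq]
    have hδeq : δ = 1 / 3 - r ^ 2 / 2 := hδdef
    linarith [ha1, ha2, hq1, hq2, hδ]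
  -- the Clifford torus condition
  · intro x hx
    have h1 := pos (x 0) (x 1) (hb1 x hx)
    have h2 := pos (x 2) (x 3) (hb2 x hx)
    rw [Phi_coord0, Phi_coord1, Phi_coord2, Phi_coord3]
    rw [torus_iff ha _ _ h1, torus_iff ha _ _ h2]
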